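/- Point probabilities of maximum entropy measures. Let 𝒱 = (v^i_j) be an (n,J)-array in ℤ^D and w ∈ ℤ^D with (Jⁿ)^𝒱_w ≠ ∅, and let μ* be any element of ℳ^𝒱_w of maximum entropy. Then every x ∈ (Jⁿ)^𝒱_w satisfies −log₂ μ*(x) ≤ H(μ*). In particular, log₂ |(Jⁿ)^𝒱_w| ≤ H(μ*). -/

import Mathlib

/-!
If `x` lies in the fibre `(Jⁿ)^𝒱_w`, the point mass at `x` belongs to `ℳ^𝒱_w`, and so does the
whole segment `(1 - t) μ* + t δₓ`, `t ∈ [0, 1]`. The entropy along this segment is therefore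
maximal at `t = 0`, so its right derivative there, `−log₂ μ*(x) − H(μ*)`, is nonpositive.
Comparing `μ*` with the uniform measure on the fibre gives the bound on the fibre size.
-/

open Finset

noncomputable section

/-- Evaluation of an `(n,J)`-array at `a ∈ Jⁿ`. -/
def arrEval {n D : ℕ} {J : Type*} (V : Fin n → J → Fin D → ℤ)
    (a : Fin n → J) (d : Fin D) : ℤ :=
  ∑ i, V i (a i) d

/-- Entropy (base 2) of a finitely supported measure. -/
noncomputable def entropy {α : Type*} [Fintype α] (μ : α → ℝ) : ℝ :=
  -∑ x, μ x * Real.logb 2 (μ x)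

/-- `μ` is a probability measure on `Jⁿ` with `𝒱(μ) = w`, i.e. `μ ∈ ℳ^𝒱_w`. -/
def MemM {n D : ℕ} {J : Type*} [Fintype J] (V : Fin n → J → Fin D → ℤ)
    (w : Fin D → ℤ) (μ : (Fin n → J) → ℝ) : Prop :=
  (∀ x, 0 ≤ μ x) ∧ (∑ x, μ x = 1) ∧
    ∀ d, ∑ a : Fin n → J, μ a * (arrEval V a d : ℝ) = (w d : ℝ)

open Real

theorem HasDerivAt.nonpos_of_isMaxOn_Icc {f : ℝ → ℝ} {f' : ℝ} (hf : HasDerivAt f f' 0)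
    (hmax : IsMaxOn f (Set.Icc 0 1) 0) : f' ≤ 0 := by
  have hcone : (1 : ℝ) ∈ posTangentConeAt (Set.Icc 0 1) 0 :=
    mem_posTangentConeAt_of_segment_subset (by simp [segment_eq_Icc])
  simpa using hmax.localize.hasFDerivWithinAt_nonpos hf.hasFDerivAt.hasFDerivWithinAt hcone

theorem hasDerivAt_negMulLog_segment {p q : ℝ} (hpq : p = 0 → q = 0) :
    HasDerivAt (fun t : ℝ => negMulLog ((1 - t) * p + t * q)) ((-log p - 1) * (q - p)) 0 := by
  by_cases hp : p = 0
  · simpa [hp, hpq hp] using hasDerivAt_const (0 : ℝ) (0 : ℝ)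
  have hline : HasDerivAt (fun t : ℝ => (1 - t) * p + t * q) (q - p) 0 :=
    ((((hasDerivAt_id (0 : ℝ)).const_sub 1).mul_const p).add
      ((hasDerivAt_id (0 : ℝ)).mul_const q)).congr_deriv (by ring)
  exact (hasDerivAt_negMulLog hp).comp_of_eq 0 hline (by simp)

section Entropy

variable {α : Type*} [Fintype α]

theorem entropy_eq_sum_negMulLog (μ : α → ℝ) : entropy μ = (∑ a, negMulLog (μ a)) / log 2 := by
  rw [entropy, Finset.sum_div, ← Finset.sum_neg_distrib]
  congr 1 with a
  rw [negMulLog, logb]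
  ring

theorem entropy_nonneg {μ : α → ℝ} (h0 : ∀ a, 0 ≤ μ a) (h1 : ∑ a, μ a = 1) : 0 ≤ entropy μ := by
  have hle : ∀ a, μ a ≤ 1 := fun a =>
    h1 ▸ Finset.single_le_sum (fun b _ => h0 b) (Finset.mem_univ a)
  rw [entropy_eq_sum_negMulLog]
  exact div_nonneg (Finset.sum_nonneg fun a _ => negMulLog_nonneg (h0 a) (hle a))
    (log_nonneg one_le_two)

def uniformDist [DecidableEq α] (A : Finset α) (a : α) : ℝ :=
  if a ∈ A then (#A : ℝ)⁻¹ else 0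

theorem entropy_uniformDist [DecidableEq α] (A : Finset α) :
    entropy (uniformDist A) = logb 2 #A := by
  rcases A.eq_empty_or_nonempty with rfl | hA
  · simp [entropy, uniformDist]
  have hcard : (#A : ℝ) ≠ 0 := by exact_mod_cast hA.card_pos.ne'
  simp [entropy, uniformDist, apply_ite (fun p : ℝ => p * logb 2 p), Finset.sum_ite_mem, logb_inv]
  field_simp

theorem hasDerivAt_sum_negMulLog_segment {μ ν : α → ℝ} (hsupp : ∀ a, μ a = 0 → ν a = 0) :
    HasDerivAt (fun t : ℝ => ∑ a, negMulLog ((1 - t) * μ a + t * ν a))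
      (∑ a, (-log (μ a) - 1) * (ν a - μ a)) 0 :=
  HasDerivAt.fun_sum fun a _ => hasDerivAt_negMulLog_segment (hsupp a)

theorem hasDerivAt_entropy_segment_pi_single [DecidableEq α] {μ : α → ℝ} (h1 : ∑ a, μ a = 1)
    {x : α} (hx : μ x ≠ 0) :
    HasDerivAt (fun t : ℝ => entropy fun a => (1 - t) * μ a + t * (Pi.single x 1 : α → ℝ) a)
      (-logb 2 (μ x) - entropy μ) 0 := by
  have hsupp : ∀ a, μ a = 0 → (Pi.single x 1 : α → ℝ) a = 0 := by
    rintro a ha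
    exact Pi.single_eq_of_ne (by rintro rfl; exact hx ha) _
  have hderiv := (hasDerivAt_sum_negMulLog_segment hsupp).div_const (log 2)
  simp only [← entropy_eq_sum_negMulLog] at hderiv
  refine hderiv.congr_deriv ?_
  have hsingle : ∑ a, (-log (μ a) - 1) * (Pi.single x 1 : α → ℝ) a = -log (μ x) - 1 := by
    simp [Pi.single_apply]
  have hself : ∑ a, (-log (μ a) - 1) * μ a = ∑ a, negMulLog (μ a) - 1 :=
    calc ∑ a, (-log (μ a) - 1) * μ a = ∑ a, (negMulLog (μ a) - μ a) := by
          congr 1 with a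
          rw [negMulLog]
          ring
      _ = ∑ a, negMulLog (μ a) - 1 := by rw [Finset.sum_sub_distrib, h1]
  simp only [entropy_eq_sum_negMulLog, mul_sub, Finset.sum_sub_distrib, hsingle, hself, logb]
  ring

theorem neg_logb_le_entropy_of_segment_le [DecidableEq α] {μ : α → ℝ} (h0 : ∀ a, 0 ≤ μ a)
    (h1 : ∑ a, μ a = 1) (x : α)
    (hmax : ∀ t ∈ Set.Icc (0 : ℝ) 1,
      entropy (fun a => (1 - t) * μ a + t * (Pi.single x 1 : α → ℝ) a) ≤ entropy μ) :
    -logb 2 (μ x) ≤ entropy μ := by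
  by_cases hx : μ x = 0
  -- `logb 2 0 = 0`, so the claim is `0 ≤ H(μ)`.
  · simpa [hx] using entropy_nonneg h0 h1
  have hderiv := hasDerivAt_entropy_segment_pi_single h1 hx
  have := hderiv.nonpos_of_isMaxOn_Icc fun t ht => by simpa using hmax t ht
  linarith

end Entropy

section Fiber

variable {n D : ℕ} {J : Type*} [Fintype J] {V : Fin n → J → Fin D → ℤ} {w : Fin D → ℤ}

theorem memM_of_support_subset {ν : (Fin n → J) → ℝ} (h0 : ∀ a, 0 ≤ ν a) (h1 : ∑ a, ν a = 1)
    (hsupp : ∀ a, ν a ≠ 0 → ∀ d, arrEval V a d = w d) : MemM V w ν := by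
  refine ⟨h0, h1, fun d => ?_⟩
  calc ∑ a, ν a * (arrEval V a d : ℝ) = ∑ a, ν a * (w d : ℝ) := by
        congr 1 with a
        by_cases ha : ν a = 0
        · simp [ha]
        · rw [hsupp a ha d]
    _ = w d := by rw [← Finset.sum_mul, h1, one_mul]

theorem MemM.segment {μ ν : (Fin n → J) → ℝ} (hμ : MemM V w μ) (hν : MemM V w ν) {t : ℝ}
    (ht : t ∈ Set.Icc (0 : ℝ) 1) : MemM V w fun a => (1 - t) * μ a + t * ν a := by
  obtain ⟨hμ0, hμ1, hμw⟩ := hμ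
  obtain ⟨hν0, hν1, hνw⟩ := hν
  obtain ⟨ht0, ht1⟩ := ht
  refine ⟨fun a => ?_, ?_, fun d => ?_⟩
  · have := hμ0 a
    have := hν0 a
    positivity
  · rw [Finset.sum_add_distrib, ← Finset.mul_sum, ← Finset.mul_sum, hμ1, hν1]
    ring
  · simp only [add_mul, mul_assoc, Finset.sum_add_distrib, ← Finset.mul_sum, hμw d, hνw d]
    ring

theorem memM_pi_single [DecidableEq (Fin n → J)] {x : Fin n → J}
    (hx : ∀ d, arrEval V x d = w d) : MemM V w (Pi.single x 1) := by
  refine memM_of_support_subset (fun a => ?_) (by simp) fun a ha => ?_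
  · rcases eq_or_ne a x with rfl | hax
    · simp
    · simp [hax]
  · rcases eq_or_ne a x with rfl | hax
    · exact hx
    · simp [hax] at ha

theorem memM_uniformDist [DecidableEq (Fin n → J)] {A : Finset (Fin n → J)} (hA : A.Nonempty)
    (hAw : ∀ a ∈ A, ∀ d, arrEval V a d = w d) : MemM V w (uniformDist A) := by
  refine memM_of_support_subset (fun a => ?_) ?_ fun a ha => ?_
  · unfold uniformDist
    split_ifs <;> positivity
  · have hcard : (#A : ℝ) ≠ 0 := by exact_mod_cast hA.card_pos.ne'
    simp [uniformDist, Finset.sum_ite_mem, hcard]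
  · by_contra haA
    exact ha (if_neg fun h => haA (hAw a h))

end Fiber

/-- **Point probabilities of maximum entropy measures.**  If `(Jⁿ)^𝒱_w ≠ ∅` and `μ*`
is an element of `ℳ^𝒱_w` of maximum entropy, then `−log₂ μ*(x) ≤ H(μ*)` for every
`x ∈ (Jⁿ)^𝒱_w`; in particular `log₂ |(Jⁿ)^𝒱_w| ≤ H(μ*)`. -/
theorem point_probabilities_max_entropy
    (n D : ℕ) (J : Type) [Fintype J]
    (V : Fin n → J → Fin D → ℤ) (w : Fin D → ℤ)
    (hne : {a : Fin n → J | ∀ d, arrEval V a d = w d}.Nonempty)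
    (μ : (Fin n → J) → ℝ) (hμ : MemM V w μ)
    (hmax : ∀ ν, MemM V w ν → entropy ν ≤ entropy μ) :
    (∀ x : Fin n → J, (∀ d, arrEval V x d = w d) → -Real.logb 2 (μ x) ≤ entropy μ) ∧
    Real.logb 2 (({a : Fin n → J | ∀ d, arrEval V a d = w d}.ncard : ℝ)) ≤ entropy μ := by
  classical
  refine ⟨fun x hx => ?_, ?_⟩
  · exact neg_logb_le_entropy_of_segment_le hμ.1 hμ.2.1 x fun t ht =>
      hmax _ (hμ.segment (memM_pi_single hx) ht)
  · set A := univ.filter fun a : Fin n → J => ∀ d, arrEval V a d = w d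
    have hfiber : {a : Fin n → J | ∀ d, arrEval V a d = w d} = A := by
      ext
      simp [A]
    rw [hfiber, Set.ncard_coe_finset, ← entropy_uniformDist]
    exact hmax _ (memM_uniformDist (Finset.coe_nonempty.mp (hfiber ▸ hne)) (by simp [A]))
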